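/- arXiv:2511.04298 — 3 statements merged into one kernel-verified Lean document; each statement's English description precedes it below -/
import Mathlib

section
/- Fix a state e₀ ∈ E and define the column vectors D_t indexed by E by D_T(u) = 𝟙(u = e₀) and D_{t−1} = H_t D_t for 2 ≤ t ≤ T. Then for every t with 1 ≤ t ≤ T and every (z₁,…,z_t) ∈ E^t, the marginal of π on {1,…,t} satisfies π₁ᵗ(z₁,…,z_t) = C^{−1} Γ_t(z₁,…,z_t) D_t, where Γ_t(z₁,…,z_t) D_t = Σ_{u ∈ E} Γ_t(z₁,…,z_t)(u) D_t(u). -/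
/-!
Write `m_t(w)` for the unnormalised marginal `∑_{y extending w} exp U_T(y)`. Summing over the
next coordinate gives `m_t(w) = ∑_v m_{t+1}(w, v)`, and `m_T = exp U_T`. The right-hand side
`Γ_t(w) D_t` obeys the same backward recursion: appending a site multiplies the weights by the
transfer matrix, `Γ_{t+1}(w, v)(u) = Γ_t(w)(v) H_t(v, u)`, so
`∑_v Γ_{t+1}(w, v) D_{t+1} = Γ_t(w) H_t D_{t+1} = Γ_t(w) D_t`; and at `t = T` it equals
`exp U_T(w)` because `Ψ_T = 0` and `D_T` is the indicator of `e₀`.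
-/

open Finset

section PrefixMarginal

variable {E M : Type*} [Fintype E] [DecidableEq E] [AddCommMonoid M] {T : ℕ}

theorem sum_take_eq_sum_sum_take_snoc (f : (Fin T → E) → M) {t : ℕ} (h : t < T)
    (w : Fin t → E) :
    ∑ y with Fin.take t h.le y = w, f y
      = ∑ v, ∑ y with Fin.take (t + 1) h y = Fin.snoc w v, f y := by
  simp only [Fin.take_succ_eq_snoc t h, Fin.snoc_inj, ← filter_filter]
  exact (sum_fiberwise _ (fun y => y ⟨t, h⟩) f).symm

theorem sum_take_eq_of_snoc_recursion (f : (Fin T → E) → M) (G : (t : ℕ) → (Fin t → E) → M)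
    (k : ℕ) (hG_last : ∀ z, G T z = f z)
    (hG_snoc : ∀ t, k ≤ t → t < T → ∀ w, G t w = ∑ v, G (t + 1) (Fin.snoc w v))
    {t : ℕ} (hkt : k ≤ t) (htT : t ≤ T) (w : Fin t → E) :
    ∑ y with Fin.take t htT y = w, f y = G t w := by
  induction htT using Nat.decreasingInduction with
  | self => simp [Fin.take_eq_self, hG_last, filter_eq']
  | of_succ t h ih =>
    rw [sum_take_eq_sum_sum_take_snoc f h, hG_snoc t hkt h]
    exact sum_congr rfl fun v _ => ih (by omega) _

end PrefixMarginal

noncomputable def chainEnergy {E : Type*} (θ : ℕ → E → ℝ) (Ψ : ℕ → E → E → ℝ) (t : ℕ)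
    (z : Fin t → E) : ℝ :=
  (∑ s : Fin t, θ s.1 (z s))
    + ∑ s : Fin (t - 1),
        Ψ s.1 (z ⟨s.1, Nat.lt_of_lt_pred s.2⟩) (z ⟨s.1 + 1, Nat.add_lt_of_lt_sub s.2⟩)

theorem chainEnergy_snoc {E : Type*} (θ : ℕ → E → ℝ) (Ψ : ℕ → E → E → ℝ) {m : ℕ}
    (w : Fin (m + 1) → E) (v : E) :
    chainEnergy θ Ψ (m + 2) (Fin.snoc w v)
      = chainEnergy θ Ψ (m + 1) w + θ (m + 1) v + Ψ m (w (Fin.last m)) v := by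
  set z : Fin (m + 2) → E := Fin.snoc w v with hz
  have hθ : ∑ s : Fin (m + 2), θ s (z s)
      = ∑ s : Fin (m + 1), θ s (w s) + θ (m + 1) v := by
    simp [hz, Fin.sum_univ_castSucc]
  have hΨ : ∑ s : Fin (m + 2 - 1), Ψ s (z ⟨s, by omega⟩) (z ⟨s + 1, by omega⟩)
      = ∑ s : Fin (m + 1 - 1), Ψ s (w ⟨s, by omega⟩) (w ⟨s + 1, by omega⟩)
        + Ψ m (w (Fin.last m)) v := by
    refine (Fin.sum_univ_castSucc (n := m) _).trans ?_
    simp [hz, Fin.snoc, Fin.last]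
  rw [chainEnergy, chainEnergy, hθ, hΨ]
  ring

-- Potentials are indexed from `0` (`θ s` is the paper's `θ_{s+1}`), while the `t` of `Γ t` and
-- `D t` counts sites as in the paper.
/-- With `D_T(u) = 𝟙(u = e₀)` and `D_{t-1} = H_t D_t`, the marginal of the
Gibbs distribution `π` on the first `t` sites satisfies
`π₁ᵗ(z₁,…,z_t) = C⁻¹ Γ_t(z₁,…,z_t) D_t = C⁻¹ ∑_u Γ_t(z₁,…,z_t)(u) D_t(u)` for `1 ≤ t ≤ T`,
where `Γ_t(z₁,…,z_t)(u) = exp(U_t(z₁,…,z_t) + Ψ_t(z_t,u))`,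
`U_t = ∑_{s=1}^{t} θ_s(z_s) + ∑_{s=1}^{t-1} Ψ_s(z_s,z_{s+1})`,
`H_t(u,v) = exp(θ_t(u) + Ψ_t(u,v))`, and `Ψ_T ≡ 0`.
(Sites and potentials are indexed from `0` here.) -/
theorem marginal_eq_gamma_dot_D
    {E : Type*} [Fintype E] [DecidableEq E]
    (T : ℕ)
    (θ : ℕ → E → ℝ) (Ψ : ℕ → E → E → ℝ)
    (hΨT : ∀ u v, Ψ (T - 1) u v = 0)
    (U : (t : ℕ) → (Fin t → E) → ℝ)
    (hU : ∀ (t : ℕ) (z : Fin t → E),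
      U t z = (∑ s : Fin t, θ s.1 (z s))
        + ∑ s : Fin (t - 1),
            Ψ s.1 (z ⟨s.1, by have := s.2; omega⟩) (z ⟨s.1 + 1, by have := s.2; omega⟩))
    (C : ℝ)
    (π : (Fin T → E) → ℝ) (hπ : ∀ z, π z = C⁻¹ * Real.exp (U T z))
    (Γ : (t : ℕ) → (Fin t → E) → E → ℝ)
    (hΓ : ∀ (t : ℕ) (ht : 1 ≤ t) (z : Fin t → E) (u : E),
      Γ t z u = Real.exp (U t z + Ψ (t - 1) (z ⟨t - 1, by omega⟩) u))
    (H : ℕ → Matrix E E ℝ)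
    (hH : ∀ t u v, H t u v = Real.exp (θ t u + Ψ t u v))
    (e₀ : E) (D : ℕ → E → ℝ)
    (hDT : ∀ u, D T u = if u = e₀ then 1 else 0)
    (hDrec : ∀ (t : ℕ), 2 ≤ t → t ≤ T → ∀ u, D (t - 1) u = ∑ v, H (t - 1) u v * D t v) :
    ∀ (t : ℕ) (ht1 : 1 ≤ t) (ht2 : t ≤ T) (w : Fin t → E),
      (∑ y : Fin T → E,
        if ∀ j : Fin t, y ⟨j.1, by have := j.2; omega⟩ = w j then π y else 0)
      = C⁻¹ * ∑ u : E, Γ t w u * D t u := by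
  intro t ht1 ht2 w
  obtain rfl : U = chainEnergy θ Ψ := funext fun t => funext (hU t)
  have hΓ_snoc : ∀ m (w : Fin (m + 1) → E) v u,
      Γ (m + 2) (Fin.snoc w v) u = Γ (m + 1) w v * H (m + 1) v u := by
    intro m w v u
    rw [hΓ _ (by omega), hΓ _ (by omega), hH]
    change Real.exp (chainEnergy θ Ψ (m + 2) (Fin.snoc w v)
        + Ψ (m + 1) ((Fin.snoc w v : Fin (m + 2) → E) (Fin.last _)) u)
      = Real.exp (chainEnergy θ Ψ (m + 1) w + Ψ m (w (Fin.last m)) v)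
        * Real.exp (θ (m + 1) v + Ψ (m + 1) v u)
    rw [← Real.exp_add, chainEnergy_snoc, Fin.snoc_last]
    ring
  have hD_step : ∀ m, m + 2 ≤ T → ∀ v, D (m + 1) v = ∑ u, H (m + 1) v u * D (m + 2) u :=
    fun m h => hDrec (m + 2) (by omega) h
  calc _ = C⁻¹ * ∑ y with Fin.take t ht2 y = w, Real.exp (chainEnergy θ Ψ T y) := by
        rw [mul_sum, sum_filter]
        refine sum_congr rfl fun y _ => ?_
        simp only [hπ, funext_iff]
        rfl
    _ = C⁻¹ * ∑ u, Γ t w u * D t u := by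
        congr 1
        refine sum_take_eq_of_snoc_recursion _ (fun t w => ∑ u, Γ t w u * D t u) 1
          ?_ ?_ ht1 ht2 w
        · intro z
          simp [hΓ T (by omega), hΨT, hDT]
        · intro t ht htT w
          obtain ⟨m, rfl⟩ : ∃ m, t = m + 1 := ⟨t - 1, by omega⟩
          refine sum_congr rfl fun v _ => ?_
          rw [hD_step m htT, mul_sum]
          exact sum_congr rfl fun u _ => by rw [hΓ_snoc, mul_assoc]
end

section
/- For the binary auto-logistic temporal model, the normalizing constant admits the closed form C = [ (λ₁^{T−1}(λ₂ − 1) + λ₂^{T−1}(1 − λ₁))(1 + e^α) + e^α (1 + e^{α+β})(λ₂^{T−1} − λ₁^{T−1}) ] / √Δ, where Δ = (1 − e^{α+β})² + 4 e^α, λ₁ = (1 + e^{α+β} − √Δ)/2 and λ₂ = (1 + e^{α+β} + √Δ)/2. -/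
/-!
Summing out the spins one site at a time (the transfer-matrix method), the partition function
`Z n` of the chain on `n + 1` sites satisfies the linear recurrence
`Z (n + 2) = (1 + e^{α+β}) Z (n + 1) - (e^{α+β} - e^α) Z n`, whose characteristic roots are
`λ₁, λ₂`. The closed form is the Binet formula for this recurrence, with
`Z 0 = 1 + e^α`, `Z 1 = 1 + e^α + e^α (1 + e^{α+β})` and `λ₂ - λ₁ = √Δ`.
-/

open Real

theorem sub_mul_eq_of_recurrence {R : Type*} [CommRing R] {a b : R} {x : ℕ → R}
    (hx : ∀ n, x (n + 2) = (a + b) * x (n + 1) - a * b * x n) (n : ℕ) :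
    (b - a) * x n = (x 1 - a * x 0) * b ^ n - (x 1 - b * x 0) * a ^ n := by
  induction n using Nat.twoStepInduction with
  | zero => ring
  | one => ring
  | more n ih₀ ih₁ =>
    rw [hx]
    linear_combination (a + b) * ih₁ - a * b * ih₀

namespace AutoLogistic

variable (α β : ℝ)

noncomputable def chainEnergy (n : ℕ) (z : Fin (n + 1) → Fin 2) : ℝ :=
  (∑ t, α * ((z t : ℕ) : ℝ))
    + ∑ t : Fin n, β * ((z t.castSucc : ℕ) : ℝ) * ((z t.succ : ℕ) : ℝ)

noncomputable def partitionFunction (n : ℕ) : ℝ :=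
  ∑ z : Fin (n + 1) → Fin 2, exp (chainEnergy α β n z)

/-- The sum of `exp (chainEnergy α β n z)` over the configurations with `z 0 = x`
(see `sum_mul_exp_chainEnergy`). -/
noncomputable def pinnedPartitionFunction : ℕ → Fin 2 → ℝ
  | 0, x => exp (α * (x : ℕ))
  | n + 1, x =>
    ∑ y : Fin 2, exp (α * (x : ℕ) + β * (x : ℕ) * (y : ℕ)) * pinnedPartitionFunction n y

theorem chainEnergy_cons (n : ℕ) (x : Fin 2) (z : Fin (n + 1) → Fin 2) :
    chainEnergy α β (n + 1) (Fin.cons x z)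
      = α * (x : ℕ) + β * (x : ℕ) * (z 0 : ℕ) + chainEnergy α β n z := by
  simp only [chainEnergy, Fin.sum_univ_succ (n := n + 1), Fin.sum_univ_succ (n := n),
    Fin.cons_zero, Fin.cons_succ, Fin.castSucc_zero, ← Fin.succ_castSucc]
  ring

theorem sum_mul_exp_chainEnergy (n : ℕ) (g : Fin 2 → ℝ) :
    ∑ z : Fin (n + 1) → Fin 2, g (z 0) * exp (chainEnergy α β n z)
      = ∑ x, g x * pinnedPartitionFunction α β n x := by
  induction n generalizing g with
  | zero =>
    rw [← (Equiv.funUnique (Fin 1) (Fin 2)).symm.sum_comp]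
    simp [chainEnergy, pinnedPartitionFunction]
  | succ n ih =>
    rw [← (Fin.consEquiv fun _ ↦ Fin 2).sum_comp, Fintype.sum_prod_type]
    refine Finset.sum_congr rfl fun x _ ↦ ?_
    rw [pinnedPartitionFunction, ← ih, Finset.mul_sum]
    refine Finset.sum_congr rfl fun z _ ↦ ?_
    change g x * exp (chainEnergy α β (n + 1) (Fin.cons x z)) = _
    rw [chainEnergy_cons, exp_add]

theorem partitionFunction_eq_sum_pinnedPartitionFunction (n : ℕ) :
    partitionFunction α β n = ∑ x, pinnedPartitionFunction α β n x := by
  simpa [partitionFunction] using sum_mul_exp_chainEnergy α β n 1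

theorem partitionFunction_zero : partitionFunction α β 0 = 1 + exp α := by
  simp [partitionFunction_eq_sum_pinnedPartitionFunction, pinnedPartitionFunction]

theorem pinnedPartitionFunction_succ_zero (n : ℕ) :
    pinnedPartitionFunction α β (n + 1) 0 = partitionFunction α β n := by
  simp [pinnedPartitionFunction, partitionFunction_eq_sum_pinnedPartitionFunction]

theorem pinnedPartitionFunction_succ_one (n : ℕ) :
    pinnedPartitionFunction α β (n + 1) 1
      = exp α * pinnedPartitionFunction α β n 0
        + exp (α + β) * pinnedPartitionFunction α β n 1 := by
  simp [pinnedPartitionFunction]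

theorem partitionFunction_succ (n : ℕ) :
    partitionFunction α β (n + 1)
      = partitionFunction α β n + pinnedPartitionFunction α β (n + 1) 1 := by
  rw [partitionFunction_eq_sum_pinnedPartitionFunction, Fin.sum_univ_two,
    pinnedPartitionFunction_succ_zero]

theorem partitionFunction_one :
    partitionFunction α β 1 = 1 + exp α + exp α * (1 + exp (α + β)) := by
  rw [partitionFunction_succ, partitionFunction_zero, pinnedPartitionFunction_succ_one]
  simp only [pinnedPartitionFunction, Fin.val_zero, Fin.val_one, Nat.cast_zero, Nat.cast_one,
    mul_zero, exp_zero, mul_one]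
  ring

theorem partitionFunction_add_two (n : ℕ) :
    partitionFunction α β (n + 2) = (1 + exp (α + β)) * partitionFunction α β (n + 1)
      - (exp (α + β) - exp α) * partitionFunction α β n := by
  have h := partitionFunction_succ α β n
  rw [partitionFunction_succ, pinnedPartitionFunction_succ_one, pinnedPartitionFunction_succ_zero]
  linear_combination -exp (α + β) * h

end AutoLogistic

/-- For the binary auto-logistic temporal model on `{0,1}^T` with energy
`U(z) = ∑_{t=1}^{T} α z_t + ∑_{t=1}^{T-1} β z_t z_{t+1}`, the normalizing constant has the
closed form
`C = [(λ₁^{T-1}(λ₂-1) + λ₂^{T-1}(1-λ₁))(1+e^α) + e^α(1+e^{α+β})(λ₂^{T-1}-λ₁^{T-1})]/√Δ`,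
where `Δ = (1-e^{α+β})² + 4e^α`, `λ₁ = (1+e^{α+β}-√Δ)/2`, `λ₂ = (1+e^{α+β}+√Δ)/2`. -/
theorem binary_autologistic_normalizing_constant_closed_form
    (T : ℕ) (hT : 2 ≤ T) (α β : ℝ)
    (U : (Fin T → Fin 2) → ℝ)
    (hU : ∀ z : Fin T → Fin 2,
      U z = (∑ t : Fin T, α * ((z t).1 : ℝ))
        + ∑ t : Fin (T - 1),
            β * ((z ⟨t.1, by have := t.2; omega⟩).1 : ℝ)
              * ((z ⟨t.1 + 1, by have := t.2; omega⟩).1 : ℝ))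
    (C : ℝ) (hC : C = ∑ z : Fin T → Fin 2, Real.exp (U z))
    (Δ lam₁ lam₂ : ℝ)
    (hΔ : Δ = (1 - Real.exp (α + β)) ^ 2 + 4 * Real.exp α)
    (hlam₁ : lam₁ = (1 + Real.exp (α + β) - Real.sqrt Δ) / 2)
    (hlam₂ : lam₂ = (1 + Real.exp (α + β) + Real.sqrt Δ) / 2) :
    C = ((lam₁ ^ (T - 1) * (lam₂ - 1) + lam₂ ^ (T - 1) * (1 - lam₁)) * (1 + Real.exp α)
          + Real.exp α * (1 + Real.exp (α + β)) * (lam₂ ^ (T - 1) - lam₁ ^ (T - 1)))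
        / Real.sqrt Δ := by
  obtain ⟨n, rfl⟩ : ∃ n, T = n + 1 := ⟨T - 1, by omega⟩
  have hCZ : C = AutoLogistic.partitionFunction α β n := by
    rw [hC, AutoLogistic.partitionFunction]
    exact Finset.sum_congr rfl fun z _ ↦ congrArg exp (hU z)
  have hΔ_pos : 0 < Δ := by rw [hΔ]; positivity
  have hsq : √Δ ^ 2 = (1 + exp (α + β)) ^ 2 - 4 * (exp (α + β) - exp α) := by
    rw [sq_sqrt hΔ_pos.le, hΔ]; ring
  have hsum : lam₁ + lam₂ = 1 + exp (α + β) := by rw [hlam₁, hlam₂]; ring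
  have hprod : lam₁ * lam₂ = exp (α + β) - exp α := by
    rw [hlam₁, hlam₂]; linear_combination (-1 / 4 : ℝ) * hsq
  have hdiff : lam₂ - lam₁ = √Δ := by rw [hlam₁, hlam₂]; ring
  have hbinet := sub_mul_eq_of_recurrence (a := lam₁) (b := lam₂)
    (fun m ↦ by rw [hsum, hprod]; exact AutoLogistic.partitionFunction_add_two α β m) n
  rw [hdiff, AutoLogistic.partitionFunction_zero, AutoLogistic.partitionFunction_one] at hbinet
  rw [Nat.add_sub_cancel, eq_div_iff (sqrt_pos.mpr hΔ_pos).ne', hCZ]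
  linear_combination hbinet
end

section
/- Let p, q ∈ (0,1), let P be the 2×2 stochastic matrix on {−1,+1} with P(−1,−1) = p, P(+1,+1) = q, and set α = (1/2) ln(p/q), β = (1/4) ln( p q / ((1−p)(1−q)) ). Let P² be the two-step transition matrix with p₂ = P²(−1,−1), q₂ = P²(+1,+1), and set α' = (1/2) ln(p₂/q₂), β' = (1/4) ln( p₂ q₂ / ((1−p₂)(1−q₂)) ). Then α' = (1/2) ln[ (1 + e^{2α+4β}) / (1 + e^{−2α+4β}) ] and β' = (1/4) ln[ 1 + e^{4β−2α}(1 − e^{−4β})² / (1 + e^{−2α})² ]. -/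
/-!
Exponentiating the Ising parameters gives `e^{2α} = p/q` and `e^{4β} = pq/((1-p)(1-q))`, and
the diagonal of `P²` is `p₂ = p² + (1-p)(1-q)`, `q₂ = q² + (1-p)(1-q)`, with
`1 - p₂ = (1-p)(p+q)` and `1 - q₂ = (1-q)(p+q)`. Both claimed formulas thereby become
identities between rational functions of `p` and `q`.
-/

open Real

-- The Ising parameters `(α, β)` of the chain with `P(-1,-1) = p`, `P(+1,+1) = q`.
noncomputable def isingAlpha (p q : ℝ) : ℝ := (1 / 2) * log (p / q)

noncomputable def isingBeta (p q : ℝ) : ℝ := (1 / 4) * log (p * q / ((1 - p) * (1 - q)))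

theorem Matrix.sq_apply_bool {R : Type*} [Semiring R] (P : Matrix Bool Bool R) (i j : Bool) :
    (P ^ 2) i j = P i false * P false j + P i true * P true j := by
  rw [sq, Matrix.mul_apply, Fintype.sum_bool, add_comm]

section IsingParameters

variable {p q : ℝ}

theorem exp_two_mul_isingAlpha (hp : 0 < p) (hq : 0 < q) :
    exp (2 * isingAlpha p q) = p / q := by
  rw [isingAlpha, ← mul_assoc, show (2 : ℝ) * (1 / 2) = 1 by norm_num, one_mul,
    exp_log (div_pos hp hq)]

theorem exp_four_mul_isingBeta (hp : 0 < p) (hq : 0 < q) (hp1 : p < 1) (hq1 : q < 1) :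
    exp (4 * isingBeta p q) = p * q / ((1 - p) * (1 - q)) := by
  have hpos : 0 < p * q / ((1 - p) * (1 - q)) :=
    div_pos (mul_pos hp hq) (mul_pos (sub_pos.2 hp1) (sub_pos.2 hq1))
  rw [isingBeta, ← mul_assoc, show (4 : ℝ) * (1 / 4) = 1 by norm_num, one_mul, exp_log hpos]

theorem isingAlpha_two_step (hp : 0 < p) (hq : 0 < q) (hp1 : p < 1) (hq1 : q < 1) :
    isingAlpha (p * p + (1 - p) * (1 - q)) (q * q + (1 - p) * (1 - q)) =
      (1 / 2) * log ((1 + exp (2 * isingAlpha p q + 4 * isingBeta p q)) /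
        (1 + exp (-(2 * isingAlpha p q) + 4 * isingBeta p q))) := by
  have hp1' : 0 < 1 - p := sub_pos.2 hp1
  have hq1' : 0 < 1 - q := sub_pos.2 hq1
  rw [isingAlpha, exp_add, exp_add, exp_neg, exp_two_mul_isingAlpha hp hq,
    exp_four_mul_isingBeta hp hq hp1 hq1]
  congr 2
  field_simp
  ring

theorem isingBeta_two_step (hp : 0 < p) (hq : 0 < q) (hp1 : p < 1) (hq1 : q < 1) :
    isingBeta (p * p + (1 - p) * (1 - q)) (q * q + (1 - p) * (1 - q)) =
      (1 / 4) * log (1 + exp (4 * isingBeta p q - 2 * isingAlpha p q) *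
        (1 - exp (-(4 * isingBeta p q))) ^ 2 / (1 + exp (-(2 * isingAlpha p q))) ^ 2) := by
  have hp1' : 0 < 1 - p := sub_pos.2 hp1
  have hq1' : 0 < 1 - q := sub_pos.2 hq1
  have hpq : 0 < p + q := add_pos hp hq
  have hp₂ : 1 - (p * p + (1 - p) * (1 - q)) = (1 - p) * (p + q) := by ring
  have hq₂ : 1 - (q * q + (1 - p) * (1 - q)) = (1 - q) * (p + q) := by ring
  rw [isingBeta, hp₂, hq₂, sub_eq_add_neg (4 * _), exp_add, exp_neg, exp_neg,
    exp_two_mul_isingAlpha hp hq, exp_four_mul_isingBeta hp hq hp1 hq1]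
  congr 2
  field_simp
  ring

end IsingParameters

/-- For `p, q ∈ (0,1)` and the transition matrix `P` on `{-1,+1}` (encoded by
`Bool` with `false ↦ -1`, `true ↦ +1`) with `P(-1,-1) = p`, `P(+1,+1) = q`, setting
`α = ½ ln(p/q)`, `β = ¼ ln(pq/((1-p)(1-q)))`, and letting `p₂ = P²(-1,-1)`,
`q₂ = P²(+1,+1)`, `α' = ½ ln(p₂/q₂)`, `β' = ¼ ln(p₂q₂/((1-p₂)(1-q₂)))`, one has
`α' = ½ ln[(1 + e^{2α+4β}) / (1 + e^{-2α+4β})]` and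
`β' = ¼ ln[1 + e^{4β-2α}(1 - e^{-4β})² / (1 + e^{-2α})²]`. -/
theorem ising_parameters_of_two_step_chain
    (p q : ℝ) (hp0 : 0 < p) (hp1 : p < 1) (hq0 : 0 < q) (hq1 : q < 1)
    (P : Matrix Bool Bool ℝ)
    (hPff : P false false = p) (hPft : P false true = 1 - p)
    (hPtf : P true false = 1 - q) (hPtt : P true true = q)
    (α β : ℝ)
    (hα : α = (1 / 2) * Real.log (p / q))
    (hβ : β = (1 / 4) * Real.log (p * q / ((1 - p) * (1 - q))))
    (p₂ q₂ : ℝ)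
    (hp₂ : p₂ = (P ^ 2) false false) (hq₂ : q₂ = (P ^ 2) true true)
    (α' β' : ℝ)
    (hα' : α' = (1 / 2) * Real.log (p₂ / q₂))
    (hβ' : β' = (1 / 4) * Real.log (p₂ * q₂ / ((1 - p₂) * (1 - q₂)))) :
    α' = (1 / 2) * Real.log ((1 + Real.exp (2 * α + 4 * β))
          / (1 + Real.exp (-(2 * α) + 4 * β)))
    ∧ β' = (1 / 4) * Real.log (1 + Real.exp (4 * β - 2 * α)
          * (1 - Real.exp (-(4 * β))) ^ 2 / (1 + Real.exp (-(2 * α))) ^ 2) := by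
  have hp₂' : p₂ = p * p + (1 - p) * (1 - q) := by
    rw [hp₂, Matrix.sq_apply_bool, hPff, hPft, hPtf]
  have hq₂' : q₂ = q * q + (1 - p) * (1 - q) := by
    rw [hq₂, Matrix.sq_apply_bool, hPtf, hPft, hPtt, add_comm, mul_comm (1 - q)]
  subst hα hβ hα' hβ' hp₂' hq₂'
  exact ⟨isingAlpha_two_step hp0 hq0 hp1 hq1, isingBeta_two_step hp0 hq0 hp1 hq1⟩
end
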